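/- Let d ≥ 1 and let m be a real number with −1/2 ≤ m ≤ 1 and m ≠ 0. Let h be a smooth, strictly positive solution on [0,T] of the thin-film equation ∂_t h + div(h ∇Δh) = 0 on 𝕋^d. Then for every t ∈ [0,T], (1/(m(m+1))) (d/dt) ∫_{𝕋^d} h^{m+1} dx + C_m ∫_{𝕋^d} h^{m-2} |∇h|^4 dx ≤ 0, where C_m = (−2m^2 + m + 1)/9 ≥ 0. -/

import Mathlib

open MeasureTheory Real

/-- Partial derivative `∂ᵢ f` of a function on `ℝᵈ` (as `EuclideanSpace`). -/
noncomputable def pder {d : ℕ} (i : Fin d) (f : EuclideanSpace ℝ (Fin d) → ℝ)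
    (x : EuclideanSpace ℝ (Fin d)) : ℝ :=
  fderiv ℝ f x (EuclideanSpace.single i 1)

/-- The Laplacian `Δ f = ∑ᵢ ∂ᵢ∂ᵢ f`. -/
noncomputable def lap {d : ℕ} (f : EuclideanSpace ℝ (Fin d) → ℝ)
    (x : EuclideanSpace ℝ (Fin d)) : ℝ :=
  ∑ i, pder i (pder i f) x

/-- Squared norm of the gradient, `|∇f|² = ∑ᵢ (∂ᵢ f)²`. -/
noncomputable def gradSq {d : ℕ} (f : EuclideanSpace ℝ (Fin d) → ℝ)
    (x : EuclideanSpace ℝ (Fin d)) : ℝ :=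
  ∑ i, (pder i f x) ^ 2

/-- Squared Frobenius norm of the Hessian, `|∇∇f|² = ∑ᵢⱼ (∂ᵢ∂ⱼ f)²`. -/
noncomputable def hessSq {d : ℕ} (f : EuclideanSpace ℝ (Fin d) → ℝ)
    (x : EuclideanSpace ℝ (Fin d)) : ℝ :=
  ∑ i, ∑ j, (pder i (pder j f) x) ^ 2

/-- The fundamental domain `[0,1)^d` of the torus `𝕋^d`. -/
def fundDom (d : ℕ) : Set (EuclideanSpace ℝ (Fin d)) :=
  {x | ∀ i, 0 ≤ x i ∧ x i < 1}

/-- `ℤ^d`-periodicity of a function on `ℝ^d`. -/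
def ZPeriodic {d : ℕ} (f : EuclideanSpace ℝ (Fin d) → ℝ) : Prop :=
  ∀ (x : EuclideanSpace ℝ (Fin d)) (k : Fin d → ℤ),
    f (x + (WithLp.equiv 2 (Fin d → ℝ)).symm (fun i => (k i : ℝ))) = f x

/-!
Fix a time `t` and write `g = h(t, ·)`. Every integration by parts below is `∫ div F = 0` over
the fundamental domain for a smooth periodic `F`; this holds because `c ↦ ∫ F(x + c eᵢ) dx` is
constant by periodicity, and its derivative is `∫ ∂ᵢF`.

Differentiating under the integral sign and integrating by parts once,
`d/dt ∫ h^{m+1} = m(m+1) S` with `S = ∫ g^m ∇g·∇Δg`. With `α = ∫ g^m |D²g|²`,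
`A = ∫ g^m (Δg)²`, `B = ∫ g^{m-1} ∇g·D²g ∇g`, `I = ∫ g^{m-1} |∇g|² Δg` and
`γ = ∫ g^{m-2} |∇g|⁴`, three more integrations by parts give
`S = -(mB + α) = -(mI + A)` and `I = -((m-1)γ + 2B)`. Expanding the squares
`g^{m-2} |g D²g - k ∇g ⊗ ∇g|² ≥ 0` and `g^{m-2} (g Δg - k |∇g|²)² ≥ 0` gives
`α ≥ 2kB - k²γ` and `A ≥ 2kI - k²γ`. For `k = (1 - m)/3`,
`-S = (2/3)(mB + α) + (1/3)(mI + A) ≥ (m + 2k)(2B + I)/3 - k²γ = (m + k) k γ = C_m γ`.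
-/

open scoped ContDiff

attribute [fun_prop] ZPeriodic Continuous.rpow_const

@[fun_prop]
lemma ContDiff.differentiableAt_of_infty {E F : Type*} [NormedAddCommGroup E] [NormedSpace ℝ E]
    [NormedAddCommGroup F] [NormedSpace ℝ F] {f : E → F} (hf : ContDiff ℝ ∞ f) (x : E) :
    DifferentiableAt ℝ f x :=
  hf.differentiable (by simp) x

section PartialDerivatives

variable {d : ℕ} {f g : EuclideanSpace ℝ (Fin d) → ℝ} {x : EuclideanSpace ℝ (Fin d)}
  (i : Fin d)

@[fun_prop]
lemma contDiff_pder (hf : ContDiff ℝ ∞ f) : ContDiff ℝ ∞ (pder i f) :=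
  (hf.fderiv_right le_rfl).clm_apply contDiff_const

lemma continuous_pder (hf : ContDiff ℝ 1 f) : Continuous (pder i f) :=
  (hf.continuous_fderiv one_ne_zero).clm_apply continuous_const

@[fun_prop]
lemma contDiff_lap (hf : ContDiff ℝ ∞ f) : ContDiff ℝ ∞ (lap f) := by
  unfold lap
  fun_prop

@[fun_prop]
lemma contDiff_gradSq (hf : ContDiff ℝ ∞ f) : ContDiff ℝ ∞ (gradSq f) := by
  unfold gradSq
  fun_prop

@[fun_prop]
lemma contDiff_hessSq (hf : ContDiff ℝ ∞ f) : ContDiff ℝ ∞ (hessSq f) := by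
  unfold hessSq
  fun_prop

lemma pder_mul (hf : DifferentiableAt ℝ f x) (hg : DifferentiableAt ℝ g x) :
    pder i (fun y => f y * g y) x = pder i f x * g x + f x * pder i g x := by
  simp only [pder, fderiv_fun_mul hf hg, add_apply, smul_apply, smul_eq_mul]
  ring

lemma pder_rpow_const (hf : DifferentiableAt ℝ f x) (hx : f x ≠ 0) (p : ℝ) :
    pder i (fun y => f y ^ p) x = p * f x ^ (p - 1) * pder i f x := by
  simp [pder, (hf.hasFDerivAt.rpow_const (Or.inl hx)).fderiv]

lemma pder_sq (hf : DifferentiableAt ℝ f x) :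
    pder i (fun y => f y ^ 2) x = 2 * f x * pder i f x := by
  simp [pder, fderiv_fun_pow 2 hf]

lemma pder_sum {ι : Type*} (s : Finset ι) {F : ι → EuclideanSpace ℝ (Fin d) → ℝ}
    (hF : ∀ j ∈ s, DifferentiableAt ℝ (F j) x) :
    pder i (fun y => ∑ j ∈ s, F j y) x = ∑ j ∈ s, pder i (F j) x := by
  simp [pder, fderiv_fun_sum hF]

lemma pder_comm (hf : ContDiffAt ℝ 2 f x) (j : Fin d) :
    pder i (pder j f) x = pder j (pder i f) x := by
  have hdiff : DifferentiableAt ℝ (fderiv ℝ f) x :=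
    (hf.fderiv_right (m := 1) (by norm_num)).differentiableAt one_ne_zero
  have hsecond : ∀ v w,
      fderiv ℝ (fun y => fderiv ℝ f y v) x w = fderiv ℝ (fderiv ℝ f) x w v := by
    intro v w
    simp [fderiv_clm_apply hdiff (differentiableAt_const v)]
  unfold pder
  rw [hsecond, hsecond, hf.isSymmSndFDerivAt (by simp)]

lemma ContDiff.pder_comm (hf : ContDiff ℝ ∞ f) (j : Fin d) (x : EuclideanSpace ℝ (Fin d)) :
    pder i (pder j f) x = pder j (pder i f) x :=
  _root_.pder_comm i (hf.contDiffAt.of_le (WithTop.coe_le_coe.2 le_top)) j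

lemma pder_gradSq (hf : ∀ j, DifferentiableAt ℝ (pder j f) x) :
    pder i (gradSq f) x = ∑ j, 2 * pder j f x * pder i (pder j f) x := by
  unfold gradSq
  rw [pder_sum (F := fun j y => pder j f y ^ 2) _ _ fun j _ => (hf j).pow 2]
  exact Finset.sum_congr rfl fun j _ => pder_sq i (hf j)

end PartialDerivatives

section Periodicity

variable {d : ℕ} {f g : EuclideanSpace ℝ (Fin d) → ℝ}

@[fun_prop]
lemma ZPeriodic.mul (hf : ZPeriodic f) (hg : ZPeriodic g) : ZPeriodic (fun x => f x * g x) :=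
  fun x k => by simp only [hf x k, hg x k]

@[fun_prop]
lemma ZPeriodic.rpow_const (hf : ZPeriodic f) (p : ℝ) : ZPeriodic (fun x => f x ^ p) :=
  fun x k => by simp only [hf x k]

@[fun_prop]
lemma ZPeriodic.pow (hf : ZPeriodic f) (n : ℕ) : ZPeriodic (fun x => f x ^ n) :=
  fun x k => by simp only [hf x k]

@[fun_prop]
lemma ZPeriodic.sum {ι : Type*} (s : Finset ι) {F : ι → EuclideanSpace ℝ (Fin d) → ℝ}
    (hF : ∀ i, ZPeriodic (F i)) : ZPeriodic (fun x => ∑ i ∈ s, F i x) :=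
  fun x k => by simp only [hF _ x k]

@[fun_prop]
lemma ZPeriodic.pder (hf : ZPeriodic f) (i : Fin d) : ZPeriodic (pder i f) := by
  intro x k
  have htrans :
      (fun y => f (y + (WithLp.equiv 2 (Fin d → ℝ)).symm (fun i => (k i : ℝ)))) = f :=
    funext fun y => hf y k
  simp only [_root_.pder, ← fderiv_comp_add_right, htrans]

@[fun_prop]
lemma ZPeriodic.lap (hf : ZPeriodic f) : ZPeriodic (lap f) := by
  unfold _root_.lap
  fun_prop

@[fun_prop]
lemma ZPeriodic.gradSq (hf : ZPeriodic f) : ZPeriodic (gradSq f) := by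
  unfold _root_.gradSq
  fun_prop

end Periodicity

section TorusIntegral

open Bornology

variable {d : ℕ}

lemma fundDom_eq_fundamentalDomain :
    fundDom d = ZSpan.fundamentalDomain (PiLp.basisFun 2 ℝ (Fin d)) := by
  ext x
  simp [fundDom, ZSpan.fundamentalDomain, Set.mem_Ico, PiLp.basisFun_repr]

lemma measurableSet_fundDom : MeasurableSet (fundDom d) := by
  rw [fundDom_eq_fundamentalDomain]
  exact ZSpan.fundamentalDomain_measurableSet _

lemma isBounded_fundDom : IsBounded (fundDom d) := by
  rw [fundDom_eq_fundamentalDomain]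
  exact ZSpan.fundamentalDomain_isBounded _

lemma Continuous.integrableOn_of_isBounded {E : Type*} [NormedAddCommGroup E] [ProperSpace E]
    [MeasurableSpace E] [OpensMeasurableSpace E] {μ : Measure E} [IsFiniteMeasureOnCompacts μ]
    {f : E → ℝ} (hf : Continuous f) {s : Set E} (hs : IsBounded s) : IntegrableOn f s μ :=
  (hf.locallyIntegrable.integrableOn_isCompact hs.isCompact_closure).mono_set subset_closure

lemma Continuous.integrableOn_fundDom {f : EuclideanSpace ℝ (Fin d) → ℝ} (hf : Continuous f) :
    IntegrableOn f (fundDom d) :=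
  hf.integrableOn_of_isBounded isBounded_fundDom

lemma ZPeriodic.apply_zspan_add {f : EuclideanSpace ℝ (Fin d) → ℝ} (hf : ZPeriodic f)
    (l : Submodule.span ℤ (Set.range (PiLp.basisFun 2 ℝ (Fin d))))
    (x : EuclideanSpace ℝ (Fin d)) :
    f (l + x) = f x := by
  obtain ⟨k, hk⟩ := (Submodule.mem_span_range_iff_exists_fun ℤ).1 l.2
  have hl : (l : EuclideanSpace ℝ (Fin d))
      = (WithLp.equiv 2 (Fin d → ℝ)).symm (fun i => (k i : ℝ)) := by
    rw [← hk]
    ext j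
    simp [Finset.sum_apply, Pi.single_apply]
  rw [hl, add_comm]
  exact hf x k

lemma ZPeriodic.setIntegral_fundDom_add {f : EuclideanSpace ℝ (Fin d) → ℝ} (hf : ZPeriodic f)
    (v : EuclideanSpace ℝ (Fin d)) :
    ∫ x in fundDom d, f (x + v) = ∫ x in fundDom d, f x := by
  let L := Submodule.span ℤ (Set.range (PiLp.basisFun 2 ℝ (Fin d)))
  have : Countable L.toAddSubgroup := inferInstanceAs (Countable L)
  have hF := ZSpan.isAddFundamentalDomain' (PiLp.basisFun 2 ℝ (Fin d)) volume
  rw [← fundDom_eq_fundamentalDomain] at hF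
  have hmp := measurePreserving_add_right (volume : Measure (EuclideanSpace ℝ (Fin d))) v
  have hF' := hF.preimage_of_equiv hmp.quasiMeasurePreserving (e := id) Function.bijective_id
    (fun l x => add_assoc _ x v)
  calc ∫ x in fundDom d, f (x + v)
      = ∫ x in (· + v) ⁻¹' fundDom d, f (x + v) :=
        hF.setIntegral_eq hF' fun l x => by
          show f (l + x + v) = f (x + v)
          rw [add_assoc]
          exact hf.apply_zspan_add l _
    _ = ∫ x in fundDom d, f x :=
        hmp.setIntegral_preimage_emb (Homeomorph.addRight v).measurableEmbedding _ _

lemma hasDerivAt_slice {E : Type*} [NormedAddCommGroup E] [NormedSpace ℝ E] {H : ℝ × E → ℝ}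
    {t : ℝ} {x : E} (hH : DifferentiableAt ℝ H (t, x)) :
    HasDerivAt (fun τ => H (τ, x)) (fderiv ℝ H (t, x) (1, 0)) t :=
  hH.hasFDerivAt.comp_hasDerivAt t ((hasDerivAt_id t).prodMk (hasDerivAt_const t x))

lemma hasDerivAt_setIntegral_of_contDiff {E : Type*} [NormedAddCommGroup E] [NormedSpace ℝ E]
    [ProperSpace E] [MeasurableSpace E] [OpensMeasurableSpace E]
    {μ : Measure E} [IsFiniteMeasureOnCompacts μ] {s : Set E} (hs : MeasurableSet s)
    (hsb : IsBounded s) {H : ℝ × E → ℝ} (hH : ContDiff ℝ 1 H) {t : ℝ} {D : E → ℝ}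
    (hD : ∀ x, HasDerivAt (fun τ => H (τ, x)) (D x) t) :
    HasDerivAt (fun τ => ∫ x in s, H (τ, x) ∂μ) (∫ x in s, D x ∂μ) t := by
  set H' : ℝ × E → ℝ := fun p => fderiv ℝ H p (1, 0)
  have hH'cont : Continuous H' := (hH.continuous_fderiv one_ne_zero).clm_apply continuous_const
  have hslice : ∀ τ x, HasDerivAt (fun τ => H (τ, x)) (H' (τ, x)) τ :=
    fun τ x => hasDerivAt_slice (E := E) (hH.differentiable one_ne_zero _)
  obtain ⟨C, hC⟩ := ((isCompact_closedBall t 1).prod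
    hsb.isCompact_closure).exists_bound_of_continuousOn hH'cont.continuousOn
  have hD' : D = fun x => H' (t, x) := funext fun x => (hD x).unique (hslice t x)
  rw [hD']
  refine (hasDerivAt_integral_of_dominated_loc_of_deriv_le (F := fun τ x => H (τ, x))
    (F' := fun τ x => H' (τ, x)) (bound := fun _ => C)
    (Metric.ball_mem_nhds t one_pos) ?_ ?_ ?_ ?_ ?_ ?_).2
  · exact .of_forall fun τ => (hH.continuous.comp (.prodMk_right τ)).aestronglyMeasurable
  · exact (hH.continuous.comp (.prodMk_right t)).integrableOn_of_isBounded hsb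
  · exact (hH'cont.comp (.prodMk_right t)).aestronglyMeasurable
  · refine (ae_restrict_iff' hs).2 (.of_forall fun x hx τ hτ => ?_)
    exact hC (τ, x) ⟨Metric.ball_subset_closedBall hτ, subset_closure hx⟩
  · exact integrableOn_const hsb.measure_lt_top.ne
  · exact .of_forall fun x τ _ => hslice τ x

lemma setIntegral_pder_eq_zero {f : EuclideanSpace ℝ (Fin d) → ℝ} (hf : ContDiff ℝ 1 f)
    (hper : ZPeriodic f) (i : Fin d) :
    ∫ x in fundDom d, pder i f x = 0 := by
  set e : EuclideanSpace ℝ (Fin d) := EuclideanSpace.single i 1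
  have hD : ∀ x, HasDerivAt (fun c : ℝ => f (x + c • e)) (pder i f x) 0 := by
    intro x
    have hline : HasDerivAt (fun c : ℝ => x + c • e) e 0 := by
      simpa using ((hasDerivAt_id (0 : ℝ)).smul_const e).const_add x
    simpa [pder, Function.comp_def] using
      ((hf.differentiable one_ne_zero) (x + (0 : ℝ) • e)).hasFDerivAt.comp_hasDerivAt 0 hline
  have hderiv := hasDerivAt_setIntegral_of_contDiff (μ := volume) measurableSet_fundDom
    isBounded_fundDom (H := fun p => f (p.2 + p.1 • e)) (by fun_prop) hD
  simp only [hper.setIntegral_fundDom_add] at hderiv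
  exact hderiv.unique (hasDerivAt_const _ _)

lemma setIntegral_eq_neg_of_add_eq_div {P Q : EuclideanSpace ℝ (Fin d) → ℝ}
    (hP : Continuous P) (hQ : Continuous Q) {F : Fin d → EuclideanSpace ℝ (Fin d) → ℝ}
    (hF : ∀ j, ContDiff ℝ 1 (F j)) (hFper : ∀ j, ZPeriodic (F j))
    (hdiv : ∀ x, P x + Q x = ∑ j, pder j (F j) x) :
    ∫ x in fundDom d, P x = -∫ x in fundDom d, Q x := by
  have hsum : ∫ x in fundDom d, (P x + Q x) = 0 := by
    simp only [hdiv]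
    rw [integral_finsetSum _ fun j _ => (continuous_pder j (hF j)).integrableOn_fundDom]
    exact Finset.sum_eq_zero fun j _ => setIntegral_pder_eq_zero (hF j) (hFper j) j
  rw [integral_add hP.integrableOn_fundDom hQ.integrableOn_fundDom] at hsum
  linarith

lemma setIntegral_eq_neg_add_of_add_add_eq_div {P Q R : EuclideanSpace ℝ (Fin d) → ℝ}
    (hP : Continuous P) (hQ : Continuous Q) (hR : Continuous R)
    {F : Fin d → EuclideanSpace ℝ (Fin d) → ℝ} (hF : ∀ j, ContDiff ℝ 1 (F j))
    (hFper : ∀ j, ZPeriodic (F j)) (hdiv : ∀ x, P x + Q x + R x = ∑ j, pder j (F j) x) :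
    ∫ x in fundDom d, P x = -((∫ x in fundDom d, Q x) + ∫ x in fundDom d, R x) := by
  rw [setIntegral_eq_neg_of_add_eq_div (Q := fun x => Q x + R x) hP (hQ.add hR) hF hFper
      fun x => by rw [← hdiv, add_assoc],
    integral_add hQ.integrableOn_fundDom hR.integrableOn_fundDom]

lemma mul_setIntegral_sub_mul_setIntegral_le {P Q R : EuclideanSpace ℝ (Fin d) → ℝ}
    (hP : Continuous P) (hQ : Continuous Q) (hR : Continuous R) (a b : ℝ)
    (h : ∀ x, a * P x - b * Q x ≤ R x) :
    a * (∫ x in fundDom d, P x) - b * ∫ x in fundDom d, Q x ≤ ∫ x in fundDom d, R x := by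
  have hPQ : Continuous fun x => a * P x - b * Q x := by fun_prop
  calc a * (∫ x in fundDom d, P x) - b * ∫ x in fundDom d, Q x
      = ∫ x in fundDom d, (a * P x - b * Q x) := by
        rw [integral_sub (hP.const_mul a).integrableOn_fundDom
          (hQ.const_mul b).integrableOn_fundDom, integral_const_mul, integral_const_mul]
    _ ≤ ∫ x in fundDom d, R x :=
        setIntegral_mono_on hPQ.integrableOn_fundDom hR.integrableOn_fundDom
          measurableSet_fundDom fun x _ => h x

end TorusIntegral

noncomputable def gradDotGradLap {d : ℕ} (f : EuclideanSpace ℝ (Fin d) → ℝ)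
    (x : EuclideanSpace ℝ (Fin d)) : ℝ :=
  ∑ i, pder i f x * pder i (lap f) x

noncomputable def gradHessGrad {d : ℕ} (f : EuclideanSpace ℝ (Fin d) → ℝ)
    (x : EuclideanSpace ℝ (Fin d)) : ℝ :=
  ∑ i, ∑ j, pder i f x * pder j f x * pder i (pder j f) x

@[fun_prop]
lemma contDiff_gradDotGradLap {d : ℕ} {f : EuclideanSpace ℝ (Fin d) → ℝ}
    (hf : ContDiff ℝ ∞ f) :
    ContDiff ℝ ∞ (gradDotGradLap f) := by
  unfold gradDotGradLap
  fun_prop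

@[fun_prop]
lemma contDiff_gradHessGrad {d : ℕ} {f : EuclideanSpace ℝ (Fin d) → ℝ}
    (hf : ContDiff ℝ ∞ f) :
    ContDiff ℝ ∞ (gradHessGrad f) := by
  unfold gradHessGrad
  fun_prop

section Dissipation

variable {d : ℕ} {g : EuclideanSpace ℝ (Fin d) → ℝ}

lemma sum_pder_rpow_mul_flux (hg : ContDiff ℝ ∞ g) (hg0 : ∀ x, g x ≠ 0) (m : ℝ)
    (x : EuclideanSpace ℝ (Fin d)) :
    ∑ i, pder i (fun y => g y ^ m * (g y * pder i (lap g) y)) x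
      = g x ^ m * ∑ i, pder i (fun y => g y * pder i (lap g) y) x
        + m * (g x ^ m * gradDotGradLap g x) := by
  rw [gradDotGradLap, Finset.mul_sum, Finset.mul_sum, Finset.mul_sum,
    ← Finset.sum_add_distrib]
  refine Finset.sum_congr rfl fun i _ => ?_
  rw [pder_mul i (f := fun y => g y ^ m) (by fun_prop (disch := exact hg0 x)) (by fun_prop),
    pder_rpow_const i (by fun_prop) (hg0 x), Real.rpow_sub_one (hg0 x)]
  field_simp [hg0 x]
  ring

lemma sum_pder_rpow_mul_grad_mul_hess (hg : ContDiff ℝ ∞ g) (hg0 : ∀ x, g x ≠ 0) (m : ℝ)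
    (x : EuclideanSpace ℝ (Fin d)) :
    ∑ j, pder j (fun y => g y ^ m * ∑ i, pder i g y * pder i (pder j g) y) x
      = g x ^ m * gradDotGradLap g x + m * (g x ^ (m - 1) * gradHessGrad g x)
        + g x ^ m * hessSq g x := by
  unfold gradDotGradLap gradHessGrad hessSq lap
  simp (disch := first | exact hg0 _ | (intros; fun_prop (disch := simp [hg0]))) only
    [pder_mul, pder_rpow_const, pder_sum]
  simp only [Finset.mul_sum, ← Finset.sum_add_distrib]
  rw [Finset.sum_comm]
  refine Finset.sum_congr rfl fun i _ => Finset.sum_congr rfl fun j _ => ?_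
  rw [hg.pder_comm j i, (contDiff_pder j hg).pder_comm j i]
  ring

lemma sum_pder_rpow_mul_grad_mul_lap (hg : ContDiff ℝ ∞ g) (hg0 : ∀ x, g x ≠ 0) (m : ℝ)
    (x : EuclideanSpace ℝ (Fin d)) :
    ∑ i, pder i (fun y => g y ^ m * (pder i g y * lap g y)) x
      = g x ^ m * gradDotGradLap g x + m * (g x ^ (m - 1) * gradSq g x * lap g x)
        + g x ^ m * lap g x ^ 2 := by
  have hsq : lap g x ^ 2 = (∑ i, pder i (pder i g) x) * lap g x := sq _
  simp (disch := first | exact hg0 _ | (intros; fun_prop (disch := simp [hg0]))) only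
    [pder_mul, pder_rpow_const]
  rw [hsq, gradDotGradLap, gradSq]
  simp only [Finset.mul_sum, Finset.sum_mul, ← Finset.sum_add_distrib]
  exact Finset.sum_congr rfl fun i _ => by ring

lemma sum_pder_rpow_mul_gradSq_mul_grad (hg : ContDiff ℝ ∞ g) (hg0 : ∀ x, g x ≠ 0) (m : ℝ)
    (x : EuclideanSpace ℝ (Fin d)) :
    ∑ j, pder j (fun y => g y ^ (m - 1) * (gradSq g y * pder j g y)) x
      = g x ^ (m - 1) * gradSq g x * lap g x + (m - 1) * (g x ^ (m - 2) * gradSq g x ^ 2)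
        + 2 * (g x ^ (m - 1) * gradHessGrad g x) := by
  have hsq : gradSq g x ^ 2 = gradSq g x * ∑ j, pder j g x ^ 2 := sq _
  simp (disch := first | exact hg0 _ | (intros; fun_prop (disch := simp [hg0]))) only
    [pder_mul, pder_rpow_const, pder_gradSq]
  rw [hsq, gradHessGrad, lap, Finset.sum_comm, show m - 1 - 1 = m - 2 by ring]
  simp only [mul_add, Finset.mul_sum, Finset.sum_mul, ← Finset.sum_add_distrib]
  refine Finset.sum_congr rfl fun j _ => ?_
  have hcomm : ∀ i, pder j (pder i g) x = pder i (pder j g) x := fun i => hg.pder_comm j i x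
  simp only [hcomm]
  ring_nf

lemma setIntegral_rpow_mul_div_flux (hg : ContDiff ℝ ∞ g) (hper : ZPeriodic g)
    (hg0 : ∀ x, g x ≠ 0) (m : ℝ) :
    ∫ x in fundDom d, g x ^ m * ∑ i, pder i (fun y => g y * pder i (lap g) y) x
      = -(m * ∫ x in fundDom d, g x ^ m * gradDotGradLap g x) := by
  rw [← integral_const_mul]
  exact setIntegral_eq_neg_of_add_eq_div (by fun_prop (disch := simp [hg0]))
    (by fun_prop (disch := simp [hg0])) (fun i => by fun_prop (disch := simp))
    (fun i => by fun_prop) fun x => (sum_pder_rpow_mul_flux hg hg0 m x).symm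

lemma setIntegral_rpow_mul_gradDotGradLap_eq_hessSq (hg : ContDiff ℝ ∞ g) (hper : ZPeriodic g)
    (hg0 : ∀ x, g x ≠ 0) (m : ℝ) :
    ∫ x in fundDom d, g x ^ m * gradDotGradLap g x
      = -(m * (∫ x in fundDom d, g x ^ (m - 1) * gradHessGrad g x)
          + ∫ x in fundDom d, g x ^ m * hessSq g x) := by
  rw [← integral_const_mul]
  exact setIntegral_eq_neg_add_of_add_add_eq_div (by fun_prop (disch := simp [hg0]))
    (by fun_prop (disch := simp [hg0])) (by fun_prop (disch := simp [hg0]))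
    (fun j => by fun_prop (disch := simp)) (fun j => by fun_prop)
    fun x => (sum_pder_rpow_mul_grad_mul_hess hg hg0 m x).symm

lemma setIntegral_rpow_mul_gradDotGradLap_eq_lap_sq (hg : ContDiff ℝ ∞ g) (hper : ZPeriodic g)
    (hg0 : ∀ x, g x ≠ 0) (m : ℝ) :
    ∫ x in fundDom d, g x ^ m * gradDotGradLap g x
      = -(m * (∫ x in fundDom d, g x ^ (m - 1) * gradSq g x * lap g x)
          + ∫ x in fundDom d, g x ^ m * lap g x ^ 2) := by
  rw [← integral_const_mul]
  exact setIntegral_eq_neg_add_of_add_add_eq_div (by fun_prop (disch := simp [hg0]))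
    (by fun_prop (disch := simp [hg0])) (by fun_prop (disch := simp [hg0]))
    (fun i => by fun_prop (disch := simp)) (fun i => by fun_prop)
    fun x => (sum_pder_rpow_mul_grad_mul_lap hg hg0 m x).symm

lemma setIntegral_rpow_mul_gradSq_mul_lap_eq (hg : ContDiff ℝ ∞ g) (hper : ZPeriodic g)
    (hg0 : ∀ x, g x ≠ 0) (m : ℝ) :
    ∫ x in fundDom d, g x ^ (m - 1) * gradSq g x * lap g x
      = -((m - 1) * (∫ x in fundDom d, g x ^ (m - 2) * gradSq g x ^ 2)
          + 2 * ∫ x in fundDom d, g x ^ (m - 1) * gradHessGrad g x) := by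
  rw [← integral_const_mul, ← integral_const_mul]
  exact setIntegral_eq_neg_add_of_add_add_eq_div (by fun_prop (disch := simp [hg0]))
    (by fun_prop (disch := simp [hg0])) (by fun_prop (disch := simp [hg0]))
    (fun j => by fun_prop (disch := simp)) (fun j => by fun_prop)
    fun x => (sum_pder_rpow_mul_gradSq_mul_grad hg hg0 m x).symm

lemma rpow_sub_one_eq_mul_and_rpow_eq_mul_sq {a : ℝ} (ha : a ≠ 0) (m : ℝ) :
    a ^ (m - 1) = a ^ (m - 2) * a ∧ a ^ m = a ^ (m - 2) * a ^ 2 := by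
  constructor
  · rw [← Real.rpow_add_one ha]; ring_nf
  · rw [← Real.rpow_add_natCast ha]; norm_num

lemma rpow_mul_gradHessGrad_le (hpos : ∀ x, 0 < g x) (m l : ℝ)
    (x : EuclideanSpace ℝ (Fin d)) :
    2 * l * (g x ^ (m - 1) * gradHessGrad g x) - l ^ 2 * (g x ^ (m - 2) * gradSq g x ^ 2)
      ≤ g x ^ m * hessSq g x := by
  obtain ⟨h1, h2⟩ := rpow_sub_one_eq_mul_and_rpow_eq_mul_sq (hpos x).ne' m
  set sumSq := ∑ i, ∑ j, (g x * pder i (pder j g) x - l * (pder i g x * pder j g x)) ^ 2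
  have hnonneg : 0 ≤ g x ^ (m - 2) * sumSq :=
    mul_nonneg (Real.rpow_nonneg (hpos x).le _) (by positivity)
  have hexpand : g x ^ (m - 2) * sumSq = g x ^ m * hessSq g x
      - (2 * l * (g x ^ (m - 1) * gradHessGrad g x)
        - l ^ 2 * (g x ^ (m - 2) * gradSq g x ^ 2)) := by
    rw [h1, h2, hessSq, gradHessGrad, sq (gradSq g x), gradSq, Finset.sum_mul_sum]
    simp only [sumSq, Finset.mul_sum, ← Finset.sum_sub_distrib]
    exact Finset.sum_congr rfl fun i _ => Finset.sum_congr rfl fun j _ => by ring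
  linarith

lemma rpow_mul_gradSq_mul_lap_le (hpos : ∀ x, 0 < g x) (m l : ℝ)
    (x : EuclideanSpace ℝ (Fin d)) :
    2 * l * (g x ^ (m - 1) * gradSq g x * lap g x) - l ^ 2 * (g x ^ (m - 2) * gradSq g x ^ 2)
      ≤ g x ^ m * lap g x ^ 2 := by
  obtain ⟨h1, h2⟩ := rpow_sub_one_eq_mul_and_rpow_eq_mul_sq (hpos x).ne' m
  rw [h1, h2]
  linear_combination mul_nonneg (Real.rpow_nonneg (hpos x).le (m - 2))
    (sq_nonneg (g x * lap g x - l * gradSq g x))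

lemma setIntegral_rpow_mul_gradDotGradLap_add_le (hg : ContDiff ℝ ∞ g) (hper : ZPeriodic g)
    (hpos : ∀ x, 0 < g x) (m : ℝ) :
    (∫ x in fundDom d, g x ^ m * gradDotGradLap g x)
      + (-2 * m ^ 2 + m + 1) / 9 * ∫ x in fundDom d, g x ^ (m - 2) * gradSq g x ^ 2 ≤ 0 := by
  have hg0 : ∀ x, g x ≠ 0 := fun x => (hpos x).ne'
  have hE1 := setIntegral_rpow_mul_gradDotGradLap_eq_hessSq hg hper hg0 m
  have hE2 := setIntegral_rpow_mul_gradDotGradLap_eq_lap_sq hg hper hg0 m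
  have hE3 := setIntegral_rpow_mul_gradSq_mul_lap_eq hg hper hg0 m
  have hHess := mul_setIntegral_sub_mul_setIntegral_le (by fun_prop (disch := simp [hg0]))
    (by fun_prop (disch := simp [hg0])) (by fun_prop (disch := simp [hg0])) _ _
    (rpow_mul_gradHessGrad_le hpos m ((1 - m) / 3))
  have hLap := mul_setIntegral_sub_mul_setIntegral_le (by fun_prop (disch := simp [hg0]))
    (by fun_prop (disch := simp [hg0])) (by fun_prop (disch := simp [hg0])) _ _
    (rpow_mul_gradSq_mul_lap_le hpos m ((1 - m) / 3))
  linear_combination (2 / 3) * hE1 + (1 / 3) * hE2 - (m + 2) / 9 * hE3 + (2 / 3) * hHess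
    + (1 / 3) * hLap

end Dissipation

lemma hasDerivAt_setIntegral_rpow_of_thinFilm {d : ℕ}
    {h : ℝ × EuclideanSpace ℝ (Fin d) → ℝ} (hsm : ContDiff ℝ ∞ h)
    (hpos : ∀ t x, 0 < h (t, x)) {t : ℝ}
    (hper : ZPeriodic (fun x => h (t, x)))
    (heq : ∀ x, deriv (fun s => h (s, x)) t
      + ∑ i, pder i (fun y => h (t, y) * pder i (lap (fun z => h (t, z))) y) x = 0) (m : ℝ) :
    HasDerivAt (fun s => ∫ x in fundDom d, h (s, x) ^ (m + 1))
      (m * (m + 1) * ∫ x in fundDom d, h (t, x) ^ m * gradDotGradLap (fun z => h (t, z)) x)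
      t := by
  set g := fun z => h (t, z)
  have hh0 : ∀ p, h p ≠ 0 := fun p => (hpos p.1 p.2).ne'
  have hslice : ∀ x, HasDerivAt (fun s => h (s, x) ^ (m + 1))
      ((m + 1) * g x ^ m * deriv (fun s => h (s, x)) t) t := fun x => by
    have hdiff := (hasDerivAt_slice (hsm.differentiableAt_of_infty (t, x))).differentiableAt
    convert hdiff.hasDerivAt.rpow_const (p := m + 1) (Or.inl (hh0 (t, x))) using 1
    rw [add_sub_cancel_right]
    ring
  convert hasDerivAt_setIntegral_of_contDiff (μ := volume) measurableSet_fundDom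
    isBounded_fundDom (H := fun p => h p ^ (m + 1)) (by fun_prop (disch := simp)) hslice using 1
  have hflux : ∀ x,
      deriv (fun s => h (s, x)) t = -∑ i, pder i (fun y => g y * pder i (lap g) y) x :=
    fun x => eq_neg_of_add_eq_zero_left (heq x)
  calc m * (m + 1) * ∫ x in fundDom d, g x ^ m * gradDotGradLap g x
      = -(m + 1) * ∫ x in fundDom d,
          g x ^ m * ∑ i, pder i (fun y => g y * pder i (lap g) y) x := by
        rw [setIntegral_rpow_mul_div_flux (by fun_prop) hper (fun x => hh0 (t, x)) m]
        ring
    _ = ∫ x in fundDom d, (m + 1) * g x ^ m * deriv (fun s => h (s, x)) t := by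
        rw [← integral_const_mul]
        simp only [hflux]
        ring_nf

theorem thinfilm_entropy_decay_general (d : ℕ) (m : ℝ)
    (hm1 : -(1 / 2 : ℝ) ≤ m) (hm2 : m ≤ 1) (hm0 : m ≠ 0)
    (T : ℝ) (h : ℝ × EuclideanSpace ℝ (Fin d) → ℝ)
    (hsm : ContDiff ℝ (⊤ : ℕ∞) h)
    (hper : ∀ t, ZPeriodic (fun x => h (t, x)))
    (hpos : ∀ t x, 0 < h (t, x))
    (heq : ∀ t ∈ Set.Icc (0 : ℝ) T, ∀ x,
      deriv (fun s => h (s, x)) t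
        + (∑ i, pder i (fun y =>
            h (t, y) * pder i (lap (fun z => h (t, z))) y) x) = 0) :
    0 ≤ (-2 * m ^ 2 + m + 1) / 9
    ∧ ∀ t ∈ Set.Icc (0 : ℝ) T,
      (1 / (m * (m + 1))) *
          deriv (fun s => ∫ x in fundDom d, h (s, x) ^ (m + 1)) t
        + ((-2 * m ^ 2 + m + 1) / 9) *
          (∫ x in fundDom d, h (t, x) ^ (m - 2) * (gradSq (fun z => h (t, z)) x) ^ 2)
        ≤ 0 := by
  refine ⟨by nlinarith, fun t ht => ?_⟩
  have hmm : m * (m + 1) ≠ 0 := mul_ne_zero hm0 (by linarith)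
  rw [(hasDerivAt_setIntegral_rpow_of_thinFilm hsm hpos (hper t) (heq t ht) m).deriv, one_div,
    inv_mul_cancel_left₀ hmm]
  exact setIntegral_rpow_mul_gradDotGradLap_add_le (by fun_prop) (hper t) (hpos t) m

/-- Decay of `∫ h^{m+1}` for the thin-film equation `∂ₜh + div(h∇Δh) = 0` on `𝕋^d`,
for `−1/2 ≤ m ≤ 1`, `m ≠ 0`, with dissipation constant `C_m = (−2m² + m + 1)/9 ≥ 0`
(Proposition `positivity`). -/
theorem thinfilm_entropy_decay (d : ℕ) (hd : 1 ≤ d) (m : ℝ)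
    (hm1 : -(1 / 2 : ℝ) ≤ m) (hm2 : m ≤ 1) (hm0 : m ≠ 0)
    (T : ℝ) (h : ℝ × EuclideanSpace ℝ (Fin d) → ℝ)
    (hsm : ContDiff ℝ (⊤ : ℕ∞) h)
    (hper : ∀ t, ZPeriodic (fun x => h (t, x)))
    (hpos : ∀ t x, 0 < h (t, x))
    (heq : ∀ t ∈ Set.Icc (0 : ℝ) T, ∀ x,
      deriv (fun s => h (s, x)) t
        + (∑ i, pder i (fun y =>
            h (t, y) * pder i (lap (fun z => h (t, z))) y) x) = 0) :
    0 ≤ (-2 * m ^ 2 + m + 1) / 9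
    ∧ ∀ t ∈ Set.Icc (0 : ℝ) T,
      (1 / (m * (m + 1))) *
          deriv (fun s => ∫ x in fundDom d, h (s, x) ^ (m + 1)) t
        + ((-2 * m ^ 2 + m + 1) / 9) *
          (∫ x in fundDom d, h (t, x) ^ (m - 2) * (gradSq (fun z => h (t, z)) x) ^ 2)
        ≤ 0 :=
  thinfilm_entropy_decay_general d m hm1 hm2 hm0 T h hsm hper hpos heq
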